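/- Let (A,a), (B,b) ∈ SA(2,ℤ) satisfy (A,a)·(B,b) = (I,x) for some x ∈ ℤ². Suppose A is a shear, let V ⊆ ℝ² be its unique one-dimensional eigenspace (the eigenspace for the eigenvalue 1), suppose x ∉ V, and let v be a nonzero vector in V. Then for every ε > 0 there exists a (possibly empty) product w of elements of {(A,a), (B,b)} such that (A,a)·w·(B,b) = (I,y) for some y ∈ ℤ² satisfying 1 − ⟨v, y⟩ / (‖v‖·‖y‖) < ε and such that y lies strictly on the same side of the line V as x. -/

import Mathlib

open scoped Matrix

abbrev SL2Z := Matrix.SpecialLinearGroup (Fin 2) ℤ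

/-- The special affine group `SA(2, ℤ) = ℤ² ⋊ SL(2, ℤ)`, as pairs `(A, a)`. -/
@[ext]
structure SA2 : Type where
  lin : SL2Z
  trans : Fin 2 → ℤ

namespace SA2

instance : Mul SA2 :=
  ⟨fun p q => ⟨p.lin * q.lin, (p.lin : Matrix (Fin 2) (Fin 2) ℤ) *ᵥ q.trans + p.trans⟩⟩

instance : One SA2 := ⟨⟨1, 0⟩⟩

instance : Inv SA2 :=
  ⟨fun p => ⟨p.lin⁻¹, -(((p.lin⁻¹ : SL2Z) : Matrix (Fin 2) (Fin 2) ℤ) *ᵥ p.trans)⟩⟩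

@[simp] lemma mul_lin (p q : SA2) : (p * q).lin = p.lin * q.lin := rfl
@[simp] lemma mul_trans (p q : SA2) :
    (p * q).trans = (p.lin : Matrix (Fin 2) (Fin 2) ℤ) *ᵥ q.trans + p.trans := rfl
@[simp] lemma one_lin : (1 : SA2).lin = 1 := rfl
@[simp] lemma one_trans : (1 : SA2).trans = 0 := rfl
@[simp] lemma inv_lin (p : SA2) : (p⁻¹).lin = p.lin⁻¹ := rfl
@[simp] lemma inv_trans (p : SA2) :
    (p⁻¹).trans = -(((p.lin⁻¹ : SL2Z) : Matrix (Fin 2) (Fin 2) ℤ) *ᵥ p.trans) := rfl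

instance : Group SA2 where
  mul_assoc a b c := by
    ext i
    · rw [mul_lin, mul_lin, mul_lin, mul_lin, mul_assoc]
    · simp only [mul_trans, mul_lin, Matrix.SpecialLinearGroup.coe_mul, Matrix.mulVec_add,
        Matrix.mulVec_mulVec, add_assoc]
  one_mul a := by
    ext i
    · simp
    · simp
  mul_one a := by
    ext i
    · simp
    · simp [Matrix.mulVec_zero]
  inv_mul_cancel a := by
    ext i
    · simp
    · simp only [mul_trans, inv_trans, inv_lin, Matrix.mulVec_neg, Matrix.mulVec_mulVec,
        ← Matrix.SpecialLinearGroup.coe_mul, mul_inv_cancel, Matrix.SpecialLinearGroup.coe_one,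
        Matrix.one_mulVec, add_neg_cancel, one_trans, Pi.zero_apply]

end SA2

/-- Standard inner product on `ℝ²`. -/
def ip (x y : Fin 2 → ℝ) : ℝ := x 0 * y 0 + x 1 * y 1

/-- Euclidean norm on `ℝ²`. -/
noncomputable def nrm (x : Fin 2 → ℝ) : ℝ := Real.sqrt (ip x x)

/-- An integer vector viewed as a real vector. -/
def toR (x : Fin 2 → ℤ) : Fin 2 → ℝ := fun i => (x i : ℝ)

/-- An integer matrix viewed as a real matrix. -/
def matR (M : Matrix (Fin 2) (Fin 2) ℤ) : Matrix (Fin 2) (Fin 2) ℝ :=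
  M.map (Int.cast : ℤ → ℝ)


/-!
Write `g = (A, a)`, `h = (B, b)` and `N = A - 1`. A shear satisfies `N² = 0`, so `Aᵏ = 1 + k N`
and `B = A⁻¹ = 1 - N`. Since `g h = (I, x)`, the words `g (gⁿ hⁿ) h` and `g (hⁿ gⁿ) h` are the
translations by `(n + 1) x + (n(n + 1)/2) N x` and `(n + 1) x - (n(n - 1)/2) N x`. As
`x ∉ V = ker N` and `N² = 0`, `N x` is a nonzero multiple of `v`, so for one of the two words the
translation is `(n + 1) x + k v` with `k > 0` quadratic in `n`: its direction tends to that of `v`,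
while its component across `V` is `n + 1` times that of `x`.
-/

open Matrix Finset

local notation:1024 "↑ₘ" M:1024 => ((M : SL2Z) : Matrix (Fin 2) (Fin 2) ℤ)

theorem List.forall_mem_replicate_append {α : Type*} (p q : α) (n : ℕ) :
    ∀ r ∈ List.replicate n p ++ List.replicate n q, r = p ∨ r = q := by
  intro r hr
  rcases List.mem_append.1 hr with hr | hr
  · exact Or.inl (List.eq_of_mem_replicate hr)
  · exact Or.inr (List.eq_of_mem_replicate hr)

theorem one_add_pow_of_mul_self_eq_zero {R : Type*} [Semiring R] {N : R} (hN : N * N = 0)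
    (k : ℕ) : (1 + N) ^ k = 1 + k • N := by
  induction k with
  | zero => simp
  | succ k ih =>
    rw [pow_succ, ih, add_mul, one_mul, mul_add, mul_one, smul_mul_assoc, hN, smul_zero,
      succ_nsmul]
    abel

theorem sum_range_pow_of_sub_one_mul_self_eq_zero {R : Type*} [Ring R] {M : R}
    (hM : (M - 1) * (M - 1) = 0) (n : ℕ) :
    ∑ k ∈ range n, M ^ k = n • 1 + (∑ k ∈ range n, k) • (M - 1) := by
  have hpow := one_add_pow_of_mul_self_eq_zero hM
  rw [add_sub_cancel] at hpow
  simp only [hpow, sum_add_distrib, sum_const, card_range, sum_smul]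

theorem Matrix.sub_one_mul_self_eq_zero {R : Type*} [CommRing R] [Nontrivial R]
    {A : Matrix (Fin 2) (Fin 2) R} (htr : A.trace = 2) (hdet : A.det = 1) :
    (A - 1) * (A - 1) = 0 := by
  have hCH := aeval_self_charpoly A
  rw [charpoly_fin_two, htr, hdet] at hCH
  simp only [map_add, map_sub, map_mul, map_pow, Polynomial.aeval_X, map_one, map_ofNat] at hCH
  rw [← hCH]
  noncomm_ring

theorem LinearMap.ker_eq_span_singleton_of_finrank_eq_two {K V W : Type*} [Field K]
    [AddCommGroup V] [Module K V] [FiniteDimensional K V] [AddCommGroup W] [Module K W]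
    (hV : Module.finrank K V = 2) {f : V →ₗ[K] W} (hf : f ≠ 0) {v : V} (hv : v ≠ 0)
    (hfv : f v = 0) : LinearMap.ker f = K ∙ v := by
  refine (Submodule.eq_of_le_of_finrank_le ((Submodule.span_singleton_le_iff_mem _ _).2 hfv)
    ?_).symm
  have hrange : 1 ≤ Module.finrank K (LinearMap.range f) :=
    Submodule.one_le_finrank_iff.2 (LinearMap.range_eq_bot.not.2 hf)
  have := LinearMap.finrank_range_add_finrank_ker f
  rw [finrank_span_singleton hv]
  omega

theorem LinearMap.exists_ne_zero_smul_eq_of_comp_self_eq_zero {K V : Type*} [Field K]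
    [AddCommGroup V] [Module K V] [FiniteDimensional K V] (hV : Module.finrank K V = 2)
    {f : V →ₗ[K] V} (hf : f ≠ 0) (hff : f ∘ₗ f = 0) {v : V} (hv : v ≠ 0) (hfv : f v = 0)
    {z : V} (hz : z ∉ K ∙ v) : ∃ s : K, s ≠ 0 ∧ f z = s • v := by
  have hker := ker_eq_span_singleton_of_finrank_eq_two hV hf hv hfv
  have hfz : f z ∈ K ∙ v := by
    rw [← hker, LinearMap.mem_ker, ← LinearMap.comp_apply, hff, LinearMap.zero_apply]
  obtain ⟨s, hs⟩ := Submodule.mem_span_singleton.1 hfz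
  refine ⟨s, ?_, hs.symm⟩
  rintro rfl
  rw [zero_smul, eq_comm, ← LinearMap.mem_ker, hker] at hs
  exact hz hs

@[simp] theorem toR_add (y z : Fin 2 → ℤ) : toR (y + z) = toR y + toR z := by
  funext i
  simp [toR]

@[simp] theorem toR_sub (y z : Fin 2 → ℤ) : toR (y - z) = toR y - toR z := by
  funext i
  simp [toR]

@[simp] theorem toR_nsmul (k : ℕ) (z : Fin 2 → ℤ) : toR (k • z) = (k : ℝ) • toR z := by
  funext i
  simp [toR]

theorem matR_mulVec_toR (M : Matrix (Fin 2) (Fin 2) ℤ) (z : Fin 2 → ℤ) :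
    matR M *ᵥ toR z = toR (M *ᵥ z) := by
  funext i
  simp [matR, toR, mulVec, dotProduct]

theorem matR_eq_mapMatrix (M : Matrix (Fin 2) (Fin 2) ℤ) :
    matR M = (Int.castRingHom ℝ).mapMatrix M :=
  rfl

theorem matR_injective : Function.Injective matR :=
  Matrix.map_injective Int.cast_injective

namespace SA2

variable {g h : SA2} {x : Fin 2 → ℤ}

theorem mul_mk_one_mul (hgh : g * h = ⟨1, x⟩) (z : Fin 2 → ℤ) :
    g * ⟨1, z⟩ * h = ⟨1, ↑ₘg.lin *ᵥ z + x⟩ := by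
  have hlin := congrArg lin hgh
  have htrans := congrArg trans hgh
  simp only [mul_lin, mul_trans] at hlin htrans
  ext1
  · simpa using hlin
  · simp only [mul_trans, mul_lin, mul_one, ← htrans]
    abel

theorem mul_eq_mk_one_of_mul_eq (hgh : g * h = ⟨1, x⟩) : h * g = ⟨1, ↑ₘh.lin *ᵥ x⟩ := by
  rw [eq_inv_mul_of_mul_eq hgh, mul_mk_one_mul (inv_mul_cancel g)]
  simp

theorem pow_mul_pow_of_mul_eq (hgh : g * h = ⟨1, x⟩) (n : ℕ) :
    g ^ n * h ^ n = ⟨1, (∑ k ∈ range n, ↑ₘg.lin ^ k) *ᵥ x⟩ := by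
  induction n with
  | zero => ext1 <;> simp
  | succ n ih =>
    rw [pow_succ' g, pow_succ h, ← mul_assoc, mul_assoc g, ih, mul_mk_one_mul hgh,
      sum_range_succ']
    simp only [pow_succ', ← mul_sum, pow_zero, add_mulVec, one_mulVec, mulVec_mulVec]

theorem mul_pow_mul_pow_mul (hgh : g * h = ⟨1, x⟩) (hN : (↑ₘg.lin - 1) * (↑ₘg.lin - 1) = 0)
    (n : ℕ) :
    g * (g ^ n * h ^ n) * h =
      ⟨1, (n + 1) • x + (∑ k ∈ range (n + 1), k) • ((↑ₘg.lin - 1) *ᵥ x)⟩ := by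
  rw [← mul_assoc, ← pow_succ', mul_assoc, ← pow_succ, pow_mul_pow_of_mul_eq hgh,
    sum_range_pow_of_sub_one_mul_self_eq_zero hN, add_mulVec, smul_mulVec, one_mulVec,
    smul_mulVec]

theorem mul_pow_mul_pow_mul_swap (hgh : g * h = ⟨1, x⟩)
    (hN : (↑ₘg.lin - 1) * (↑ₘg.lin - 1) = 0) (n : ℕ) :
    g * (h ^ n * g ^ n) * h = ⟨1, (n + 1) • x - (∑ k ∈ range n, k) • ((↑ₘg.lin - 1) *ᵥ x)⟩ := by
  have hAB : ↑ₘg.lin * h.lin = 1 := by simpa using congrArg (fun p : SA2 => ↑ₘp.lin) hgh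
  have hB : ↑ₘh.lin - 1 = -(↑ₘg.lin - 1) := by
    have hinv : (1 - (↑ₘg.lin - 1)) * g.lin = 1 := by
      rw [show (1 - (↑ₘg.lin - 1)) * g.lin = 1 - (↑ₘg.lin - 1) * (↑ₘg.lin - 1) by noncomm_ring,
        hN, sub_zero]
    rw [← left_inv_eq_right_inv hinv hAB]
    abel
  have hcomm : Commute (∑ k ∈ range n, ↑ₘh.lin ^ k) h.lin :=
    Commute.sum_left _ _ _ fun k _ => (Commute.refl _).pow_left k
  rw [pow_mul_pow_of_mul_eq (mul_eq_mk_one_of_mul_eq hgh), mul_mk_one_mul hgh, mulVec_mulVec,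
    mulVec_mulVec, mul_assoc, hcomm.eq, ← mul_assoc, hAB, one_mul,
    sum_range_pow_of_sub_one_mul_self_eq_zero (by rw [hB, neg_mul_neg, hN]), hB]
  ext1
  · rfl
  · simp only [add_mulVec, smul_mulVec, one_mulVec, neg_mulVec]
    module

theorem exists_word_toR_eq (hgh : g * h = ⟨1, x⟩) (hN : (↑ₘg.lin - 1) * (↑ₘg.lin - 1) = 0)
    {v : Fin 2 → ℝ} {s : ℝ} (hs0 : s ≠ 0) (hs : toR ((↑ₘg.lin - 1) *ᵥ x) = s • v) (n : ℕ) :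
    ∃ w : List SA2, (∀ p ∈ w, p = g ∨ p = h) ∧
      ∃ y : Fin 2 → ℤ, g * w.prod * h = ⟨1, y⟩ ∧
        ∃ k : ℝ, |s| * ∑ i ∈ range n, (i : ℝ) ≤ k ∧ toR y = ((n : ℝ) + 1) • toR x + k • v := by
  rcases hs0.lt_or_gt with hneg | hpos
  · refine ⟨List.replicate n h ++ List.replicate n g,
      fun p hp => (List.forall_mem_replicate_append h g n p hp).symm, _,
      by rw [List.prod_append, List.prod_replicate, List.prod_replicate,
        mul_pow_mul_pow_mul_swap hgh hN],
      (∑ i ∈ range n, (i : ℝ)) * -s, by rw [abs_of_neg hneg, mul_comm], ?_⟩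
    simp only [toR_sub, toR_nsmul, hs]
    push_cast
    module
  · refine ⟨List.replicate n g ++ List.replicate n h, List.forall_mem_replicate_append g h n, _,
      by rw [List.prod_append, List.prod_replicate, List.prod_replicate,
        mul_pow_mul_pow_mul hgh hN],
      (∑ i ∈ range (n + 1), (i : ℝ)) * s, ?_, ?_⟩
    · rw [abs_of_pos hpos, mul_comm, sum_range_succ]
      nlinarith [n.cast_nonneg (α := ℝ)]
    · simp only [toR_add, toR_nsmul, hs]
      push_cast
      module

end SA2

noncomputable def cosAngle (v z : Fin 2 → ℝ) : ℝ := ip v z / (nrm v * nrm z)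

theorem ip_smul_add_smul (n x v : Fin 2 → ℝ) (m k : ℝ) :
    ip n (m • x + k • v) = m * ip n x + k * ip n v := by
  simp only [ip, Pi.add_apply, Pi.smul_apply, smul_eq_mul]
  ring

theorem ip_self_pos {v : Fin 2 → ℝ} (hv : v ≠ 0) : 0 < ip v v := by
  have hdot : ip v v = v ⬝ᵥ v := by simp [ip, dotProduct, Fin.sum_univ_two]
  have hnonneg : 0 ≤ ip v v := add_nonneg (mul_self_nonneg _) (mul_self_nonneg _)
  exact hnonneg.lt_of_ne' (by rw [hdot]; exact dotProduct_self_eq_zero.not.2 hv)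

theorem nrm_smul_of_nonneg {k : ℝ} (hk : 0 ≤ k) (z : Fin 2 → ℝ) :
    nrm (k • z) = k * nrm z := by
  have hip : ip (k • z) (k • z) = k * k * ip z z := by
    simp only [ip, Pi.smul_apply, smul_eq_mul]
    ring
  rw [nrm, nrm, hip, Real.sqrt_mul (mul_self_nonneg k), Real.sqrt_mul_self hk]

theorem cosAngle_smul_right (v z : Fin 2 → ℝ) {k : ℝ} (hk : 0 < k) :
    cosAngle v (k • z) = cosAngle v z := by
  have hip : ip v (k • z) = k * ip v z := by simpa using ip_smul_add_smul v z z k 0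
  rw [cosAngle, cosAngle, nrm_smul_of_nonneg hk.le, hip, mul_left_comm,
    mul_div_mul_left _ _ hk.ne']

theorem cosAngle_self {v : Fin 2 → ℝ} (hv : v ≠ 0) : cosAngle v v = 1 := by
  rw [cosAngle, nrm, Real.mul_self_sqrt (ip_self_pos hv).le, div_self (ip_self_pos hv).ne']

theorem continuous_nrm : Continuous nrm := by
  unfold nrm ip
  fun_prop

theorem exists_one_sub_cosAngle_lt (x : Fin 2 → ℝ) {v : Fin 2 → ℝ} (hv : v ≠ 0) {ε : ℝ}
    (hε : 0 < ε) :
    ∃ δ > 0, ∀ m k : ℝ, 0 < k → |m| < δ * k → 1 - cosAngle v (m • x + k • v) < ε := by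
  have hcont : ContinuousAt (fun t : ℝ => cosAngle v (t • x + v)) 0 := by
    have hnrm : nrm v * nrm ((0 : ℝ) • x + v) ≠ 0 := by
      rw [zero_smul, zero_add, nrm, Real.mul_self_sqrt (ip_self_pos hv).le]
      exact (ip_self_pos hv).ne'
    unfold cosAngle
    refine ContinuousAt.div ?_ ?_ hnrm
    · unfold ip
      fun_prop
    · exact (continuous_const.mul (continuous_nrm.comp (by fun_prop))).continuousAt
  obtain ⟨δ, hδ, hclose⟩ := Metric.continuousAt_iff.1 hcont ε hε
  refine ⟨δ, hδ, fun m k hk hm => ?_⟩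
  have hscale : m • x + k • v = k • ((m / k) • x + v) := by
    rw [smul_add, smul_smul, mul_div_cancel₀ _ hk.ne']
  have hdist : dist (m / k) 0 < δ := by
    rwa [Real.dist_0_eq_abs, abs_div, abs_of_pos hk, div_lt_iff₀ hk]
  have hnear := hclose hdist
  rw [zero_smul, zero_add, cosAngle_self hv, Real.dist_eq] at hnear
  rw [hscale, cosAngle_smul_right _ _ hk]
  linarith [neg_abs_le (cosAngle v ((m / k) • x + v) - 1)]

theorem exists_add_one_lt_mul_sum_range {c : ℝ} (hc : 0 < c) :
    ∃ n : ℕ, (n + 1 : ℝ) < c * ∑ k ∈ range n, (k : ℝ) := by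
  obtain ⟨n, hn⟩ := exists_nat_gt (4 / c)
  refine ⟨n + 2, ?_⟩
  have hsum : (∑ k ∈ range (n + 2), (k : ℝ)) * 2 = ((n : ℝ) + 2) * ((n : ℝ) + 1) := by
    have h : (∑ k ∈ range (n + 2), k) * 2 = (n + 2) * (n + 1) := sum_range_id_mul_two (n + 2)
    have hcast := congrArg (Nat.cast : ℕ → ℝ) h
    push_cast at hcast
    exact hcast
  have hcn : 4 < c * n := by rwa [div_lt_iff₀ hc, mul_comm] at hn
  push_cast
  nlinarith

theorem ip_ne_zero_of_notMem_span {n v₀ z : Fin 2 → ℝ} (hn : n ≠ 0) (hv₀ : v₀ ≠ 0)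
    (hnv₀ : ip n v₀ = 0) (hz : z ∉ ℝ ∙ v₀) : ip n z ≠ 0 := by
  have hip : ∀ y, ip n y = dotProductEquiv ℝ (Fin 2) n y := fun y => by
    simp [ip, dotProduct, Fin.sum_univ_two]
  have hf : dotProductEquiv ℝ (Fin 2) n ≠ 0 := fun h => (ip_self_pos hn).ne' (by simp [hip, h])
  rw [hip]
  intro hnz
  apply hz
  rw [← LinearMap.ker_eq_span_singleton_of_finrank_eq_two (Module.finrank_fin_fun ℝ) hf hv₀
    (by rw [← hip, hnv₀])]
  exact hnz

theorem pos_ip_smul_add_smul_mul_ip {n v₀ x v : Fin 2 → ℝ} (hnv₀ : ip n v₀ = 0)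
    (hv : v ∈ ℝ ∙ v₀) (hnx : ip n x ≠ 0) {m : ℝ} (hm : 0 < m) (k : ℝ) :
    0 < ip n (m • x + k • v) * ip n x := by
  obtain ⟨c, rfl⟩ := Submodule.mem_span_singleton.1 hv
  have hnv : ip n (c • v₀) = 0 := by simpa [hnv₀] using ip_smul_add_smul n v₀ v₀ c 0
  rw [ip_smul_add_smul, hnv, mul_zero, add_zero, mul_assoc]
  exact mul_pos hm (mul_self_pos.2 hnx)

/-- Let `(A,a)·(B,b) = (I,x)` in `SA(2,ℤ)`, with `A` a shear whose
unique invariant line is `V = span {v₀}` (eigenvalue `1`), and `x ∉ V`.  Let `v` be a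
nonzero vector of `V`.  Then for every `ε > 0` there is a word `w` over
`{(A,a),(B,b)}` with `(A,a)·w·(B,b) = (I,y)`, where `1 - ⟨v,y⟩/(‖v‖‖y‖) < ε` and `y`
lies strictly on the same side of the line `V` as `x` (tested against any nonzero
normal vector of `V`). -/
theorem shear_angle_limit
    (A B : SL2Z) (a b x : Fin 2 → ℤ)
    (hprod : SA2.mk A a * SA2.mk B b = SA2.mk 1 x)
    (hshear : Matrix.trace (A : Matrix (Fin 2) (Fin 2) ℤ) = 2 ∧ A ≠ 1)
    (v0 : Fin 2 → ℝ) (hv0 : v0 ≠ 0)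
    (heig : matR (A : Matrix (Fin 2) (Fin 2) ℤ) *ᵥ v0 = v0)
    (hxnot : toR x ∉ (Submodule.span ℝ ({v0} : Set (Fin 2 → ℝ)) : Set (Fin 2 → ℝ)))
    (v : Fin 2 → ℝ) (hv : v ≠ 0)
    (hvmem : v ∈ Submodule.span ℝ ({v0} : Set (Fin 2 → ℝ)))
    (ε : ℝ) (hε : 0 < ε) :
    ∃ w : List SA2, (∀ g ∈ w, g = SA2.mk A a ∨ g = SA2.mk B b) ∧
      ∃ y : Fin 2 → ℤ, SA2.mk A a * w.prod * SA2.mk B b = SA2.mk 1 y ∧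
        1 - ip v (toR y) / (nrm v * nrm (toR y)) < ε ∧
        ∀ n : Fin 2 → ℝ, n ≠ 0 → ip n v0 = 0 → 0 < ip n (toR y) * ip n (toR x) := by
  have hNN := sub_one_mul_self_eq_zero hshear.1 A.det_coe
  have hN : matR (↑ₘA - 1) ≠ 0 := fun h => hshear.2 <| Subtype.ext <| sub_eq_zero.1 <|
    matR_injective (h.trans (Matrix.map_zero _ Int.cast_zero).symm)
  have hNv : matR (↑ₘA - 1) *ᵥ v = 0 := by
    obtain ⟨c, rfl⟩ := Submodule.mem_span_singleton.1 hvmem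
    rw [mulVec_smul, matR_eq_mapMatrix, map_sub, map_one, ← matR_eq_mapMatrix, sub_mulVec, heig,
      one_mulVec, sub_self, smul_zero]
  obtain ⟨s, hs0, hs⟩ := LinearMap.exists_ne_zero_smul_eq_of_comp_self_eq_zero
    (Module.finrank_fin_fun ℝ) (f := toLin' (matR (↑ₘA - 1))) ((LinearEquiv.map_ne_zero_iff _).2 hN)
    (by rw [← toLin'_mul, matR_eq_mapMatrix, ← map_mul, hNN, map_zero, map_zero])
    hv (by rwa [toLin'_apply])
    (fun hx => hxnot ((Submodule.span_singleton_le_iff_mem _ _).2 hvmem hx))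
  rw [toLin'_apply, matR_mulVec_toR] at hs
  obtain ⟨δ, hδ, hcos⟩ := exists_one_sub_cosAngle_lt (toR x) hv hε
  obtain ⟨n, hn⟩ := exists_add_one_lt_mul_sum_range (mul_pos hδ (abs_pos.2 hs0))
  obtain ⟨w, hw, y, hy, k, hk, hyR⟩ := SA2.exists_word_toR_eq hprod hNN hs0 hs n
  have hk0 : 0 < k := by nlinarith [n.cast_nonneg (α := ℝ)]
  refine ⟨w, hw, y, hy, ?_, fun m hm hmv0 => ?_⟩
  · rw [hyR]
    refine hcos _ _ hk0 ?_
    rw [abs_of_pos (by positivity)]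
    nlinarith
  · rw [hyR]
    exact pos_ip_smul_add_smul_mul_ip hmv0 hvmem (ip_ne_zero_of_notMem_span hm hv0 hmv0 hxnot)
      (by positivity) k
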